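/- arXiv:1907.12230 — 3 statements merged into one kernel-verified Lean document; each statement's English description precedes it below -/
import Mathlib

section
/- Let Ω ⊆ ℝ³ be an open set, w : ℝ³ → ℝ³ a smooth (C^∞) vector field and h : ℝ³ → ℝ a smooth function such that curl w = h·w and div w = 0 on Ω. Let a, b ∈ ℝ³, set ξ_E(x) = a + b × x, and suppose L_{ξ_E} h = ξ_E·∇h = 0 on Ω. Define the sequence of vector fields w⁰ = w and wⁿ⁺¹ = L_{ξ_E} wⁿ. Then for every n ∈ ℕ one has curl wⁿ = h·wⁿ and div wⁿ = 0 on Ω; that is, every iterated Lie derivative of a solenoidal Beltrami field along a continuous Euclidean symmetry of its proportionality coefficient is again a solenoidal Beltrami field with the same proportionality coefficient (or the zero field). -/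
noncomputable section

abbrev R3 : Type := Fin 3 → ℝ

/-- Partial derivative of a scalar field in the `i`-th coordinate direction. -/
def pd (i : Fin 3) (f : R3 → ℝ) (x : R3) : ℝ := fderiv ℝ f x (Pi.single i 1)

/-- Curl of a vector field on ℝ³. -/
def vcurl (v : R3 → R3) (x : R3) : R3 :=
  ![pd 1 (fun y => v y 2) x - pd 2 (fun y => v y 1) x,
    pd 2 (fun y => v y 0) x - pd 0 (fun y => v y 2) x,
    pd 0 (fun y => v y 1) x - pd 1 (fun y => v y 0) x]

/-- Divergence of a vector field on ℝ³. -/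
def vdiv (v : R3 → R3) (x : R3) : ℝ :=
  pd 0 (fun y => v y 0) x + pd 1 (fun y => v y 1) x + pd 2 (fun y => v y 2) x

/-- Componentwise directional derivative `(ξ·∇)v`. -/
def dirDeriv (ξ v : R3 → R3) (x : R3) : R3 :=
  fun j => ∑ i : Fin 3, ξ x i * pd i (fun y => v y j) x

/-- Lie derivative of a vector field: `L_ξ v = (ξ·∇)v − (v·∇)ξ`. -/
def lieD (ξ v : R3 → R3) : R3 → R3 :=
  fun x => dirDeriv ξ v x - dirDeriv v ξ x

/-- Gradient of a scalar field on ℝ³. -/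
def grad3 (f : R3 → ℝ) (x : R3) : R3 := fun i => pd i f x

/- ### auxiliary lemmas -/

lemma pd_congr {i : Fin 3} {f g : R3 → ℝ} {x : R3} (hfg : f =ᶠ[nhds x] g) :
    pd i f x = pd i g x := by
  unfold pd; rw [hfg.fderiv_eq]

lemma pd_add {i : Fin 3} {f g : R3 → ℝ} {x : R3} (hf : DifferentiableAt ℝ f x)
    (hg : DifferentiableAt ℝ g x) :
    pd i (fun y => f y + g y) x = pd i f x + pd i g x := by
  unfold pd; rw [fderiv_fun_add hf hg]; rfl

lemma pd_sub {i : Fin 3} {f g : R3 → ℝ} {x : R3} (hf : DifferentiableAt ℝ f x)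
    (hg : DifferentiableAt ℝ g x) :
    pd i (fun y => f y - g y) x = pd i f x - pd i g x := by
  unfold pd; rw [fderiv_fun_sub hf hg]; rfl

lemma pd_mul {i : Fin 3} {f g : R3 → ℝ} {x : R3} (hf : DifferentiableAt ℝ f x)
    (hg : DifferentiableAt ℝ g x) :
    pd i (fun y => f y * g y) x = pd i f x * g x + f x * pd i g x := by
  unfold pd; rw [fderiv_fun_mul hf hg]; simp; ring

lemma pd_const {i : Fin 3} {c : ℝ} {x : R3} : pd i (fun _ => c) x = 0 := by
  unfold pd; simp

lemma contDiff_pd {f : R3 → ℝ} (hf : ContDiff ℝ (⊤ : ℕ∞) f) (i : Fin 3) :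
    ContDiff ℝ (⊤ : ℕ∞) (pd i f) :=
  (hf.fderiv_right (by simp)).clm_apply contDiff_const

lemma pd_comm {f : R3 → ℝ} (hf : ContDiff ℝ (⊤ : ℕ∞) f) (i j : Fin 3) (x : R3) :
    pd i (pd j f) x = pd j (pd i f) x := by
  have hd : DifferentiableAt ℝ (fderiv ℝ f) x :=
    ((hf.fderiv_right (m := (⊤ : ℕ∞)) (by simp)).differentiable (by simp)).differentiableAt
  have key : ∀ k l : Fin 3, pd k (pd l f) x
      = fderiv ℝ (fderiv ℝ f) x (Pi.single k 1) (Pi.single l 1) := by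
    intro k l
    show fderiv ℝ (fun y => fderiv ℝ f y (Pi.single l 1)) x (Pi.single k 1) = _
    rw [fderiv_clm_apply hd (differentiableAt_const _)]
    simp
  rw [key, key]
  exact (hf.contDiffAt.isSymmSndFDerivAt (by rw [minSmoothness_of_isRCLikeNormedField]; exact WithTop.coe_le_coe.mpr le_top)) _ _

/-- derivative matrix of ξ: `Bm b k j = ∂ₖ ξ_j`. -/
def Bm (b : R3) : Fin 3 → Fin 3 → ℝ :=
  ![![0, b 2, -b 1], ![-b 2, 0, b 0], ![b 1, -b 0, 0]]

lemma contDiff_xi (a b : R3) : ContDiff ℝ (⊤ : ℕ∞) (fun y : R3 => a + crossProduct b y) :=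
  contDiff_const.add (LinearMap.toContinuousLinearMap (crossProduct b)).contDiff

lemma pd_xi (a b : R3) (k j : Fin 3) (x : R3) :
    pd k (fun y : R3 => (a + crossProduct b y) j) x = Bm b k j := by
  have h : HasFDerivAt (fun y : R3 => a + crossProduct b y)
      (LinearMap.toContinuousLinearMap (crossProduct b)) x := by
    have := (LinearMap.toContinuousLinearMap (crossProduct b)).hasFDerivAt (x := x)
    simpa using this.const_add a
  have h2 : HasFDerivAt (fun y : R3 => (a + crossProduct b y) j)
      ((ContinuousLinearMap.proj j).comp
        (LinearMap.toContinuousLinearMap (crossProduct b))) x :=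
    ((ContinuousLinearMap.proj j).hasFDerivAt.comp x h :)
  unfold pd
  rw [h2.fderiv]
  show crossProduct b (Pi.single k 1) j = _
  fin_cases k <;> fin_cases j <;>
    simp [crossProduct, Bm, Pi.single_apply]

lemma pd_pd_xi (a b : R3) (i k j : Fin 3) (x : R3) :
    pd i (pd k (fun y : R3 => (a + crossProduct b y) j)) x = 0 := by
  have : pd k (fun y : R3 => (a + crossProduct b y) j) = fun _ => Bm b k j :=
    funext fun y => pd_xi a b k j y
  rw [this]; exact pd_const

lemma contDiff_dirDeriv {u v : R3 → R3} (hu : ContDiff ℝ (⊤ : ℕ∞) u) (hv : ContDiff ℝ (⊤ : ℕ∞) v)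
    (j : Fin 3) : ContDiff ℝ (⊤ : ℕ∞) (fun y => dirDeriv u v y j) := by
  unfold dirDeriv
  exact ContDiff.sum fun i _ =>
    (contDiff_pi.mp hu i).mul (contDiff_pd (contDiff_pi.mp hv j) i)

lemma contDiff_lieD {u v : R3 → R3} (hu : ContDiff ℝ (⊤ : ℕ∞) u) (hv : ContDiff ℝ (⊤ : ℕ∞) v) :
    ContDiff ℝ (⊤ : ℕ∞) (lieD u v) := by
  rw [contDiff_pi]
  exact fun j => (contDiff_dirDeriv hu hv j).sub (contDiff_dirDeriv hv hu j)

lemma pd_dirDeriv {u v : R3 → R3} (hu : ContDiff ℝ (⊤ : ℕ∞) u) (hv : ContDiff ℝ (⊤ : ℕ∞) v)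
    (k j : Fin 3) (x : R3) :
    pd k (fun y => dirDeriv u v y j) x
      = ∑ i : Fin 3, (pd k (fun y => u y i) x * pd i (fun y => v y j) x
          + u x i * pd i (pd k (fun y => v y j)) x) := by
  have hvj := contDiff_pi.mp hv j
  have hui : ∀ i : Fin 3, DifferentiableAt ℝ (fun y => u y i) x := fun i =>
    ((contDiff_pi.mp hu i).differentiable (by simp)).differentiableAt
  have hpd : ∀ i : Fin 3, DifferentiableAt ℝ (pd i (fun y => v y j)) x := fun i =>
    ((contDiff_pd hvj i).differentiable (by simp)).differentiableAt
  have hterm : ∀ i : Fin 3, DifferentiableAt ℝ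
      (fun y => u y i * pd i (fun z => v z j) y) x := fun i => (hui i).mul (hpd i)
  have e1 : (fun y => dirDeriv u v y j)
      = fun y => u y 0 * pd 0 (fun z => v z j) y + u y 1 * pd 1 (fun z => v z j) y
          + u y 2 * pd 2 (fun z => v z j) y := by
    funext y; simp [dirDeriv, Fin.sum_univ_three]
  rw [e1, pd_add ((hterm 0).fun_add (hterm 1)) (hterm 2), pd_add (hterm 0) (hterm 1),
    pd_mul (hui 0) (hpd 0), pd_mul (hui 1) (hpd 1), pd_mul (hui 2) (hpd 2),
    Fin.sum_univ_three, pd_comm hvj 0 k, pd_comm hvj 1 k, pd_comm hvj 2 k]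

/-- Master formula for the partial derivatives of the Lie derivative along ξ. -/
lemma pd_lieD (a b : R3) {v : R3 → R3} (hv : ContDiff ℝ (⊤ : ℕ∞) v) (k j : Fin 3) (x : R3) :
    pd k (fun y => lieD (fun z => a + crossProduct b z) v y j) x
      = (∑ i : Fin 3, (Bm b k i * pd i (fun y => v y j) x
          + (a + crossProduct b x) i * pd i (pd k (fun y => v y j)) x))
        - ∑ i : Fin 3, pd k (fun y => v y i) x * Bm b i j := by
  have hξ := contDiff_xi a b
  have e1 : (fun y => lieD (fun z => a + crossProduct b z) v y j)
      = fun y => (fun z => dirDeriv (fun z' => a + crossProduct b z') v z j) y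
          - (fun z => dirDeriv v (fun z' => a + crossProduct b z') z j) y := by
    funext y; simp [lieD]
  rw [e1, pd_sub ((contDiff_dirDeriv hξ hv j).differentiable (by simp)).differentiableAt
      ((contDiff_dirDeriv hv hξ j).differentiable (by simp)).differentiableAt,
    pd_dirDeriv hξ hv k j x, pd_dirDeriv hv hξ k j x]
  congr 1
  · refine Finset.sum_congr rfl fun i _ => ?_
    rw [pd_xi a b k i x]
  · refine Finset.sum_congr rfl fun i _ => ?_
    rw [pd_xi a b i j x, pd_pd_xi a b i k j x]
    ring

/-- evaluation of the Lie derivative itself. -/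
lemma lieD_apply (a b : R3) (v : R3 → R3) (x : R3) (j : Fin 3) :
    lieD (fun z => a + crossProduct b z) v x j
      = (∑ i : Fin 3, (a + crossProduct b x) i * pd i (fun y => v y j) x)
        - ∑ i : Fin 3, v x i * Bm b i j := by
  simp only [lieD, Pi.sub_apply, dirDeriv]
  congr 1
  refine Finset.sum_congr rfl fun i _ => ?_
  rw [pd_xi a b i j x]

lemma deriv_of_curl_comp {Ω : Set R3} (hΩ : IsOpen Ω) {v : R3 → R3} {h : R3 → ℝ}
    (hv : ContDiff ℝ (⊤ : ℕ∞) v) (hh : ContDiff ℝ (⊤ : ℕ∞) h)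
    (i1 j1 i2 j2 m : Fin 3)
    (hcomp : ∀ y ∈ Ω, pd i1 (fun z => v z j1) y - pd i2 (fun z => v z j2) y = h y * v y m)
    {x : R3} (hx : x ∈ Ω) (i : Fin 3) :
    pd i (pd i1 (fun z => v z j1)) x - pd i (pd i2 (fun z => v z j2)) x
      = pd i h x * v x m + h x * pd i (fun z => v z m) x := by
  have hev : (fun y => pd i1 (fun z => v z j1) y - pd i2 (fun z => v z j2) y)
      =ᶠ[nhds x] fun y => h y * v y m :=
    Filter.eventuallyEq_of_mem (hΩ.mem_nhds hx) hcomp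
  have e := pd_congr (i := i) hev
  rw [pd_sub ((contDiff_pd (contDiff_pi.mp hv j1) i1).differentiable (by simp)).differentiableAt
      ((contDiff_pd (contDiff_pi.mp hv j2) i2).differentiable (by simp)).differentiableAt,
    pd_mul (hh.differentiable (by simp)).differentiableAt
      ((contDiff_pi.mp hv m).differentiable (by simp)).differentiableAt] at e
  exact e

lemma deriv_of_div {Ω : Set R3} (hΩ : IsOpen Ω) {v : R3 → R3}
    (hv : ContDiff ℝ (⊤ : ℕ∞) v)
    (hdiv : ∀ y ∈ Ω, vdiv v y = 0)
    {x : R3} (hx : x ∈ Ω) (i : Fin 3) :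
    pd i (pd 0 (fun z => v z 0)) x + pd i (pd 1 (fun z => v z 1)) x
      + pd i (pd 2 (fun z => v z 2)) x = 0 := by
  have hev : (fun y => (pd 0 (fun z => v z 0) y + pd 1 (fun z => v z 1) y)
        + pd 2 (fun z => v z 2) y) =ᶠ[nhds x] fun _ => (0 : ℝ) :=
    Filter.eventuallyEq_of_mem (hΩ.mem_nhds hx) hdiv
  have e := pd_congr (i := i) hev
  have d : ∀ k j : Fin 3, DifferentiableAt ℝ (pd k (fun z => v z j)) x := fun k j =>
    ((contDiff_pd (contDiff_pi.mp hv j) k).differentiable (by simp)).differentiableAt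
  rw [pd_add ((d 0 0).fun_add (d 1 1)) (d 2 2), pd_add (d 0 0) (d 1 1), pd_const] at e
  linarith [e]

lemma step {Ω : Set R3} (hΩ : IsOpen Ω)
    {v : R3 → R3} {h : R3 → ℝ}
    (hv : ContDiff ℝ (⊤ : ℕ∞) v) (hh : ContDiff ℝ (⊤ : ℕ∞) h)
    (a b : R3)
    (hsym : ∀ x ∈ Ω, (∑ i : Fin 3, (a + crossProduct b x) i * pd i h x) = 0)
    (hBel : ∀ x ∈ Ω, vcurl v x = h x • v x)
    (hdiv : ∀ x ∈ Ω, vdiv v x = 0) :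
    ∀ x ∈ Ω, (vcurl (lieD (fun y => a + crossProduct b y) v) x
        = h x • lieD (fun y => a + crossProduct b y) v x)
      ∧ vdiv (lieD (fun y => a + crossProduct b y) v) x = 0 := by
  intro x hx
  -- pointwise curl equations
  have c0 : ∀ y ∈ Ω, pd 1 (fun z => v z 2) y - pd 2 (fun z => v z 1) y = h y * v y 0 := by
    intro y hy; have := congrFun (hBel y hy) 0; simpa [vcurl] using this
  have c1 : ∀ y ∈ Ω, pd 2 (fun z => v z 0) y - pd 0 (fun z => v z 2) y = h y * v y 1 := by
    intro y hy; have := congrFun (hBel y hy) 1; simpa [vcurl] using this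
  have c2 : ∀ y ∈ Ω, pd 0 (fun z => v z 1) y - pd 1 (fun z => v z 0) y = h y * v y 2 := by
    intro y hy; have := congrFun (hBel y hy) 2; simpa [vcurl] using this
  have dE0 := deriv_of_curl_comp hΩ hv hh 1 2 2 1 0 c0 hx
  have dE1 := deriv_of_curl_comp hΩ hv hh 2 0 0 2 1 c1 hx
  have dE2 := deriv_of_curl_comp hΩ hv hh 0 1 1 0 2 c2 hx
  have dD := deriv_of_div hΩ hv (by intro y hy; exact hdiv y hy) hx
  have hs := hsym x hx
  rw [Fin.sum_univ_three] at hs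
  have cc0 := c0 x hx; have cc1 := c1 x hx; have cc2 := c2 x hx
  have ev : ∀ j : Fin 3, (h x • lieD (fun y => a + crossProduct b y) v x) j
      = h x * ((∑ i : Fin 3, (a + crossProduct b x) i * pd i (fun y => v y j) x)
          - ∑ i : Fin 3, v x i * Bm b i j) := by
    intro j; rw [Pi.smul_apply, smul_eq_mul, lieD_apply]
  have comp0 : vcurl (lieD (fun y => a + crossProduct b y) v) x 0
      = (h x • lieD (fun y => a + crossProduct b y) v x) 0 := by
    rw [show vcurl (lieD (fun y => a + crossProduct b y) v) x 0
        = pd 1 (fun y => lieD (fun z => a + crossProduct b z) v y 2) x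
          - pd 2 (fun y => lieD (fun z => a + crossProduct b z) v y 1) x from rfl,
      pd_lieD a b hv 1 2 x, pd_lieD a b hv 2 1 x, ev 0]
    simp only [Fin.sum_univ_three, Bm, Matrix.cons_val_zero, Matrix.cons_val_one,
      Matrix.head_cons, Matrix.cons_val_two, Matrix.tail_cons]
    linear_combination (a + crossProduct b x) 0 * dE0 0 + (a + crossProduct b x) 1 * dE0 1
      + (a + crossProduct b x) 2 * dE0 2 + v x 0 * hs + b 2 * cc1 - b 1 * cc2
  have comp1 : vcurl (lieD (fun y => a + crossProduct b y) v) x 1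
      = (h x • lieD (fun y => a + crossProduct b y) v x) 1 := by
    rw [show vcurl (lieD (fun y => a + crossProduct b y) v) x 1
        = pd 2 (fun y => lieD (fun z => a + crossProduct b z) v y 0) x
          - pd 0 (fun y => lieD (fun z => a + crossProduct b z) v y 2) x from rfl,
      pd_lieD a b hv 2 0 x, pd_lieD a b hv 0 2 x, ev 1]
    simp only [Fin.sum_univ_three, Bm, Matrix.cons_val_zero, Matrix.cons_val_one,
      Matrix.head_cons, Matrix.cons_val_two, Matrix.tail_cons]
    linear_combination (a + crossProduct b x) 0 * dE1 0 + (a + crossProduct b x) 1 * dE1 1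
      + (a + crossProduct b x) 2 * dE1 2 + v x 1 * hs + b 0 * cc2 - b 2 * cc0
  have comp2 : vcurl (lieD (fun y => a + crossProduct b y) v) x 2
      = (h x • lieD (fun y => a + crossProduct b y) v x) 2 := by
    rw [show vcurl (lieD (fun y => a + crossProduct b y) v) x 2
        = pd 0 (fun y => lieD (fun z => a + crossProduct b z) v y 1) x
          - pd 1 (fun y => lieD (fun z => a + crossProduct b z) v y 0) x from rfl,
      pd_lieD a b hv 0 1 x, pd_lieD a b hv 1 0 x, ev 2]
    simp only [Fin.sum_univ_three, Bm, Matrix.cons_val_zero, Matrix.cons_val_one,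
      Matrix.head_cons, Matrix.cons_val_two, Matrix.tail_cons]
    linear_combination (a + crossProduct b x) 0 * dE2 0 + (a + crossProduct b x) 1 * dE2 1
      + (a + crossProduct b x) 2 * dE2 2 + v x 2 * hs + b 1 * cc0 - b 0 * cc1
  constructor
  · funext j
    fin_cases j
    · exact comp0
    · exact comp1
    · exact comp2
  · show pd 0 _ x + pd 1 _ x + pd 2 _ x = 0
    rw [pd_lieD a b hv 0 0 x, pd_lieD a b hv 1 1 x, pd_lieD a b hv 2 2 x]
    simp only [Fin.sum_univ_three, Bm, Matrix.cons_val_zero, Matrix.cons_val_one,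
      Matrix.head_cons, Matrix.cons_val_two, Matrix.tail_cons]
    linear_combination (a + crossProduct b x) 0 * dD 0 + (a + crossProduct b x) 1 * dD 1
      + (a + crossProduct b x) 2 * dD 2


/-- iterated Lie derivatives of a solenoidal Beltrami field along a
continuous Euclidean symmetry of its proportionality coefficient are again
solenoidal Beltrami fields with the same coefficient. -/
theorem iterated_lie_of_beltrami_is_beltrami
    (Ω : Set R3) (hΩ : IsOpen Ω)
    (w : R3 → R3) (h : R3 → ℝ)
    (hw : ContDiff ℝ (⊤ : ℕ∞) w) (hh : ContDiff ℝ (⊤ : ℕ∞) h)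
    (hBel : ∀ x ∈ Ω, vcurl w x = h x • w x)
    (hdiv : ∀ x ∈ Ω, vdiv w x = 0)
    (a b : R3)
    (hsym : ∀ x ∈ Ω,
      (∑ i : Fin 3, (a + crossProduct b x) i * pd i h x) = 0) :
    ∀ n : ℕ, ∀ x ∈ Ω,
      vcurl ((lieD (fun y => a + crossProduct b y))^[n] w) x
          = h x • ((lieD (fun y => a + crossProduct b y))^[n] w) x
        ∧ vdiv ((lieD (fun y => a + crossProduct b y))^[n] w) x = 0 := by
  have key : ∀ n : ℕ, ContDiff ℝ (⊤ : ℕ∞) ((lieD (fun y => a + crossProduct b y))^[n] w)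
      ∧ ∀ x ∈ Ω, vcurl ((lieD (fun y => a + crossProduct b y))^[n] w) x
            = h x • ((lieD (fun y => a + crossProduct b y))^[n] w) x
          ∧ vdiv ((lieD (fun y => a + crossProduct b y))^[n] w) x = 0 := by
    intro n
    induction n with
    | zero => exact ⟨hw, fun x hx => ⟨hBel x hx, hdiv x hx⟩⟩
    | succ n ih =>
      rw [Function.iterate_succ_apply']
      exact ⟨contDiff_lieD (contDiff_xi a b) ih.1,
        step hΩ ih.1 hh a b hsym (fun x hx => (ih.2 x hx).1) (fun x hx => (ih.2 x hx).2)⟩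
  exact fun n x hx => (key n).2 x hx
end
end

section
/- Define w : ℝ³ → ℝ³ by w(x,y,z) = (x + e^{−z}, −y, 1), and let Ω be the open unit ball in ℝ³ centered at the origin. Then w has no continuous Euclidean symmetry on Ω: for all a, b ∈ ℝ³, if the Lie derivative L_{ξ_E} w vanishes identically on Ω for ξ_E(x) = a + b × x, then a = 0 and b = 0. -/
noncomputable section

lemma pdEq {f : R3 → ℝ} {L : R3 →L[ℝ] ℝ} {x : R3} (h : HasFDerivAt f L x) (i : Fin 3) :
    pd i f x = L (Pi.single i 1) := by rw [pd, h.fderiv]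

lemma pd_w0 (i : Fin 3) (x : R3) :
    pd i (fun y : R3 => y 0 + Real.exp (-(y 2))) x
      = (Pi.single i 1 : R3) 0 - Real.exp (-(x 2)) * (Pi.single i 1 : R3) 2 := by
  have h2 : HasFDerivAt (fun y : R3 => y 2)
      (ContinuousLinearMap.proj 2 : R3 →L[ℝ] ℝ) x :=
    (ContinuousLinearMap.proj 2 : R3 →L[ℝ] ℝ).hasFDerivAt
  have hexp : HasFDerivAt (fun y : R3 => Real.exp (-(y 2)))
      (Real.exp (-(x 2)) • (-(ContinuousLinearMap.proj 2 : R3 →L[ℝ] ℝ))) x :=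
    by have := (Real.hasDerivAt_exp (-(x 2))).comp_hasFDerivAt x h2.neg; exact this
  have h0 : HasFDerivAt (fun y : R3 => y 0)
      (ContinuousLinearMap.proj 0 : R3 →L[ℝ] ℝ) x :=
    (ContinuousLinearMap.proj 0 : R3 →L[ℝ] ℝ).hasFDerivAt
  rw [pdEq (f := fun y : R3 => y 0 + Real.exp (-(y 2))) (h0.add hexp)]
  simp [mul_comm]
  ring

lemma pd_w1 (i : Fin 3) (x : R3) :
    pd i (fun y : R3 => -(y 1)) x = -(Pi.single i 1 : R3) 1 := by
  have h1 : HasFDerivAt (fun y : R3 => y 1)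
      (ContinuousLinearMap.proj 1 : R3 →L[ℝ] ℝ) x :=
    (ContinuousLinearMap.proj 1 : R3 →L[ℝ] ℝ).hasFDerivAt
  rw [pdEq (f := fun y : R3 => -(y 1)) h1.neg]
  simp

lemma pd_w2 (i : Fin 3) (x : R3) : pd i (fun _ : R3 => (1:ℝ)) x = 0 := by
  rw [pdEq (hasFDerivAt_const 1 x)]
  simp

lemma pd_affine (i : Fin 3) (c r s : ℝ) (j k : Fin 3) (x : R3) :
    pd i (fun y : R3 => c + (r * y j - s * y k)) x
      = r * (Pi.single i 1 : R3) j - s * (Pi.single i 1 : R3) k := by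
  have hj : HasFDerivAt (fun y : R3 => y j)
      (ContinuousLinearMap.proj j : R3 →L[ℝ] ℝ) x :=
    (ContinuousLinearMap.proj j : R3 →L[ℝ] ℝ).hasFDerivAt
  have hk : HasFDerivAt (fun y : R3 => y k)
      (ContinuousLinearMap.proj k : R3 →L[ℝ] ℝ) x :=
    (ContinuousLinearMap.proj k : R3 →L[ℝ] ℝ).hasFDerivAt
  rw [pdEq (f := fun y : R3 => c + (r * y j - s * y k))
      ((hasFDerivAt_const c x).add ((hj.const_mul r).sub (hk.const_mul s)))]
  simp

lemma lieD_comp (a b x : R3) :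
    (lieD (fun y => a + crossProduct b y)
        (fun p => ![p 0 + Real.exp (-(p 2)), -(p 1), 1]) x 0
      = (a 0 + (b 1 * x 2 - b 2 * x 1))
        - (a 2 + (b 0 * x 1 - b 1 * x 0)) * Real.exp (-(x 2)) - (b 2 * x 1 + b 1))
    ∧ (lieD (fun y => a + crossProduct b y)
        (fun p => ![p 0 + Real.exp (-(p 2)), -(p 1), 1]) x 1
      = -(a 1 + (b 2 * x 0 - b 0 * x 2)) - (b 2 * (x 0 + Real.exp (-(x 2))) - b 0))
    ∧ (lieD (fun y => a + crossProduct b y)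
        (fun p => ![p 0 + Real.exp (-(p 2)), -(p 1), 1]) x 2
      = b 1 * (x 0 + Real.exp (-(x 2))) + b 0 * x 1) := by
  refine ⟨?_, ?_, ?_⟩ <;>
  · simp only [lieD, dirDeriv, Pi.sub_apply, Fin.sum_univ_three, cross_apply, Pi.add_apply,
      Matrix.cons_val_zero, Matrix.cons_val_one, Matrix.head_cons, Matrix.cons_val_two,
      Matrix.tail_cons, Fin.isValue]
    rw [show ((2:Fin 3)) = (2:Fin 3) from rfl]
    first
    | rw [pd_w0 0, pd_w0 1, pd_w0 2,
        pd_affine 0 (a 0) (b 1) (b 2) 2 1, pd_affine 1 (a 0) (b 1) (b 2) 2 1,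
        pd_affine 2 (a 0) (b 1) (b 2) 2 1]
    | rw [pd_w1 0, pd_w1 1, pd_w1 2,
        pd_affine 0 (a 1) (b 2) (b 0) 0 2, pd_affine 1 (a 1) (b 2) (b 0) 0 2,
        pd_affine 2 (a 1) (b 2) (b 0) 0 2]
    | rw [pd_w2 0, pd_w2 1, pd_w2 2,
        pd_affine 0 (a 2) (b 0) (b 1) 1 0, pd_affine 1 (a 2) (b 0) (b 1) 1 0,
        pd_affine 2 (a 2) (b 0) (b 1) 1 0]
    simp [Pi.single_apply]
    ring

/-- the magnetofluidostatic field `w = (x + e⁻ᶻ, −y, 1)` has no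
continuous Euclidean symmetry on the open unit ball centered at the origin. -/
theorem explicit_mfs_exp_negz_no_euclidean_symmetry :
    let w : R3 → R3 := fun p => ![p 0 + Real.exp (-(p 2)), -(p 1), 1]
    let Ω : Set R3 := {p | (p 0) ^ 2 + (p 1) ^ 2 + (p 2) ^ 2 < 1}
    ∀ a b : R3,
      (∀ x ∈ Ω, lieD (fun y => a + crossProduct b y) w x = 0) →
      a = 0 ∧ b = 0 := by
  intro w Ω a b h
  -- evaluation points
  have h00 : (0 : R3) ∈ Ω := by simp [Ω]
  have hq0 : (![1/2,0,0] : R3) ∈ Ω := by norm_num [Ω, Matrix.cons_val_two, Matrix.tail_cons, Matrix.head_cons, Matrix.cons_val_one, Matrix.cons_val_zero]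
  have hq1 : (![0,1/2,0] : R3) ∈ Ω := by norm_num [Ω, Matrix.cons_val_two, Matrix.tail_cons, Matrix.head_cons, Matrix.cons_val_one, Matrix.cons_val_zero]
  have hq2 : (![0,0,1/2] : R3) ∈ Ω := by norm_num [Ω, Matrix.cons_val_two, Matrix.tail_cons, Matrix.head_cons, Matrix.cons_val_one, Matrix.cons_val_zero]
  have e0 : Real.exp (-(0:ℝ)) = 1 := by norm_num
  -- component equations
  have E0 := fun (x : R3) (hx : x ∈ Ω) => (lieD_comp a b x).1.symm.trans (congrFun (h x hx) 0)
  have E1 := fun (x : R3) (hx : x ∈ Ω) => (lieD_comp a b x).2.1.symm.trans (congrFun (h x hx) 1)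
  have E2 := fun (x : R3) (hx : x ∈ Ω) => (lieD_comp a b x).2.2.symm.trans (congrFun (h x hx) 2)
  -- b 1 = 0 : from E2 at 0
  have A := E2 0 h00
  have B := E2 ![0,1/2,0] hq1
  have C0 := E1 0 h00
  have C1 := E1 ![1/2,0,0] hq0
  have D0 := E0 0 h00
  have D1 := E0 ![0,0,1/2] hq2
  simp only [Matrix.cons_val_zero, Matrix.cons_val_one, Matrix.head_cons, Matrix.cons_val_two,
    Matrix.tail_cons, Pi.zero_apply, neg_zero, Real.exp_zero, Pi.ofNat_apply] at A B C0 C1 D0 D1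
  have hb1 : b 1 = 0 := by linarith
  have hb0 : b 0 = 0 := by rw [hb1] at B; linarith
  have hb2 : b 2 = 0 := by rw [hb0] at C0 C1; linarith
  have ha1 : a 1 = 0 := by rw [hb0, hb2] at C0; linarith
  have hexp : Real.exp (-(1/2 : ℝ)) < 1 := Real.exp_lt_one_iff.mpr (by norm_num)
  have ha2 : a 2 = 0 := by
    rw [hb0, hb1, hb2] at D0 D1
    nlinarith
  have ha0 : a 0 = 0 := by rw [hb0, hb1, hb2, ha2] at D0; linarith
  constructor <;> funext i <;> fin_cases i <;> assumption
end
end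

section
/- Define w : ℝ³ → ℝ³ by w(x,y,z) = (x + yz, −2y, z), and let Ω be the open unit ball in ℝ³ centered at the origin. Then w has no continuous Euclidean symmetry on Ω: for all a, b ∈ ℝ³, if the Lie derivative L_{ξ_E} w vanishes identically on Ω for ξ_E(x) = a + b × x, then a = 0 and b = 0. -/
noncomputable section

lemma pd_eq {f : R3 → ℝ} {x : R3} {L : R3 →L[ℝ] ℝ} (h : HasFDerivAt f L x) (i : Fin 3) :
    pd i f x = L (Pi.single i 1) := by rw [pd, h.fderiv]

lemma pd_g1 (x : R3) (i : Fin 3) : pd i (fun y : R3 => y 0 + y 1 * y 2) x = ![1, x 2, x 1] i := by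
  rw [pd_eq (f := fun y : R3 => y 0 + y 1 * y 2) ((hasFDerivAt_apply (𝕜:=ℝ) 0 x).add ((hasFDerivAt_apply (𝕜:=ℝ) 1 x).mul (hasFDerivAt_apply (𝕜:=ℝ) 2 x)))]
  fin_cases i <;> simp [Pi.single_apply]

lemma pd_g2 (x : R3) (i : Fin 3) : pd i (fun y : R3 => -2 * y 1) x = ![0, -2, 0] i := by
  rw [pd_eq ((hasFDerivAt_apply (𝕜:=ℝ) 1 x).const_mul (-2))]
  fin_cases i <;> simp [Pi.single_apply]

lemma pd_g3 (x : R3) (i : Fin 3) : pd i (fun y : R3 => y 2) x = ![0, 0, 1] i := by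
  rw [pd_eq (hasFDerivAt_apply (𝕜:=ℝ) 2 x)]
  fin_cases i <;> simp [Pi.single_apply]

lemma pd_g4 (c u v : ℝ) (x : R3) (i : Fin 3) :
    pd i (fun y : R3 => c + (u * y 2 - v * y 1)) x = ![0, -v, u] i := by
  rw [pd_eq (f := fun y : R3 => c + (u * y 2 - v * y 1)) ((((hasFDerivAt_apply (𝕜:=ℝ) 2 x).const_mul u).sub ((hasFDerivAt_apply (𝕜:=ℝ) 1 x).const_mul v)).const_add c)]
  fin_cases i <;> simp [Pi.single_apply]

lemma pd_g5 (c u v : ℝ) (x : R3) (i : Fin 3) :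
    pd i (fun y : R3 => c + (u * y 0 - v * y 2)) x = ![u, 0, -v] i := by
  rw [pd_eq (f := fun y : R3 => c + (u * y 0 - v * y 2)) ((((hasFDerivAt_apply (𝕜:=ℝ) 0 x).const_mul u).sub ((hasFDerivAt_apply (𝕜:=ℝ) 2 x).const_mul v)).const_add c)]
  fin_cases i <;> simp [Pi.single_apply]

lemma pd_g6 (c u v : ℝ) (x : R3) (i : Fin 3) :
    pd i (fun y : R3 => c + (u * y 1 - v * y 0)) x = ![-v, u, 0] i := by
  rw [pd_eq (f := fun y : R3 => c + (u * y 1 - v * y 0)) ((((hasFDerivAt_apply (𝕜:=ℝ) 1 x).const_mul u).sub ((hasFDerivAt_apply (𝕜:=ℝ) 0 x).const_mul v)).const_add c)]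
  fin_cases i <;> simp [Pi.single_apply]

lemma pd_g2n (x : R3) (i : Fin 3) : pd i (fun y : R3 => -(2 * y 1)) x = ![0, -2, 0] i := by
  rw [pd_eq (f := fun y : R3 => -(2 * y 1)) (((hasFDerivAt_apply (𝕜:=ℝ) 1 x).const_mul 2).neg)]
  fin_cases i <;> simp [Pi.single_apply]

theorem explicit_mfs_yz_no_euclidean_symmetry :
    let w : R3 → R3 := fun p => ![p 0 + p 1 * p 2, -2 * p 1, p 2]
    let Ω : Set R3 := {p | (p 0) ^ 2 + (p 1) ^ 2 + (p 2) ^ 2 < 1}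
    ∀ a b : R3,
      (∀ x ∈ Ω, lieD (fun y => a + crossProduct b y) w x = 0) →
      a = 0 ∧ b = 0 := by
  intro w Ω a b h
  have h0 := h ![0,0,0] (by simp [Ω])
  have h1 := h ![0,1/2,0] (by norm_num [Ω, Matrix.cons_val_two, Matrix.tail_cons, Matrix.head_cons])
  have h2 := h ![0,1/2,1/2] (by norm_num [Ω, Matrix.cons_val_two, Matrix.tail_cons, Matrix.head_cons])
  have e00 := congrFun h0 0
  have e01 := congrFun h0 1
  have e02 := congrFun h0 2
  have e10 := congrFun h1 0
  have e12 := congrFun h1 2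
  have e22 := congrFun h2 2
  simp [lieD, dirDeriv, Fin.sum_univ_three, w, cross_apply, pd_g1, pd_g2, pd_g3, pd_g4, pd_g5, pd_g6, pd_g2n, Matrix.vecHead, Matrix.vecTail] at e00 e01 e02 e10 e12 e22
  have hb0 : b 0 = 0 := by linarith
  have hb2 : b 2 = 0 := by linarith
  have hb1 : b 1 = 0 := by linarith
  refine ⟨funext fun i => ?_, funext fun i => ?_⟩ <;> fin_cases i <;>
    simp only [Pi.zero_apply] <;>
    first | exact e00 | exact e01 | exact e02 | exact hb0 | exact hb1 | exact hb2
end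
end
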